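/- Let f : (0,∞) → ℝ be smooth with 0 < f < 1, and define the 2×2 matrix operators G₀ = [[∂_r - f'/f, f], [f, ∂_r + 1/r]] and N₀ = [[-Δ_r + b² + (λ/2)(f²-1) + f², -2f'], [-2f', -Δ_r + 1/r² + f²]], where b = n(1-a)/r and f, a solve the radial Ginzburg–Landau ODEs. Then N₀ = G₀* G₀, where G₀* is the formal adjoint of G₀ with respect to the inner product on L²((0,∞), r dr)². -/

import Mathlib

open Set

/-- First component of `G₀ = [[∂_r - f'/f, f], [f, ∂_r + 1/r]]` applied to `(u,v)`. -/
noncomputable def G0₁ (f u v : ℝ → ℝ) (s : ℝ) : ℝ :=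
  deriv u s - (deriv f s / f s) * u s + f s * v s

/-- Second component of `G₀` applied to `(u,v)`. -/
noncomputable def G0₂ (f u v : ℝ → ℝ) (s : ℝ) : ℝ :=
  f s * u s + deriv v s + v s / s

/-- First component of the formal adjoint `G₀*` (w.r.t. `L²((0,∞), r dr)²`) applied to `(p,q)`. -/
noncomputable def G0star₁ (f p q : ℝ → ℝ) (s : ℝ) : ℝ :=
  -(deriv p s) - p s / s - (deriv f s / f s) * p s + f s * q s

/-- Second component of `G₀*` applied to `(p,q)`. -/
noncomputable def G0star₂ (f p q : ℝ → ℝ) (s : ℝ) : ℝ :=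
  f s * p s - deriv q s

lemma hda (f : ℝ → ℝ) (hf : ∀ r ∈ Ioi (0:ℝ), ContDiffAt ℝ (⊤ : ℕ∞) f r)
    {r : ℝ} (hr : r ∈ Ioi (0:ℝ)) :
    HasDerivAt f (deriv f r) r ∧ HasDerivAt (deriv f) (deriv (deriv f) r) r := by
  have h1 : ContDiffOn ℝ 2 f (Ioi 0) := fun x hx => ((hf x hx).of_le (by exact WithTop.coe_le_coe.mpr (le_top : (2:ℕ∞) ≤ ⊤))).contDiffWithinAt
  have h2 : ContDiffOn ℝ 1 (deriv f) (Ioi 0) := h1.deriv_of_isOpen isOpen_Ioi (by norm_num)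
  constructor
  · exact (((hf r hr).of_le (by simp) : ContDiffAt ℝ 1 f r).differentiableAt one_ne_zero).hasDerivAt
  · exact ((h2.contDiffAt (isOpen_Ioi.mem_nhds hr)).differentiableAt one_ne_zero).hasDerivAt

/-- the factorization `N₀ = G₀* G₀`, as an identity of differential
expressions on smooth pairs `(u,v)` over `(0,∞)`, where
`N₀ = [[-Δ_r + b² + (λ/2)(f²-1) + f², -2f'], [-2f', -Δ_r + 1/r² + f²]]`,
`b = n(1-a)/r`, and `f, a` solve the radial Ginzburg–Landau ODEs. -/
theorem stmt5 (n : ℕ) (hn : 0 < n) (lam : ℝ) (f a : ℝ → ℝ)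
    (hf : ∀ r ∈ Ioi (0:ℝ), ContDiffAt ℝ (⊤ : ℕ∞) f r)
    (ha : ∀ r ∈ Ioi (0:ℝ), ContDiffAt ℝ (⊤ : ℕ∞) a r)
    (hf01 : ∀ r ∈ Ioi (0:ℝ), 0 < f r ∧ f r < 1)
    (hode1 : ∀ r ∈ Ioi (0:ℝ),
      -(deriv (deriv f) r) - deriv f r / r
        + ((n:ℝ) * (1 - a r) / r)^2 * f r
        + lam / 2 * ((f r)^2 - 1) * f r = 0)
    (hode2 : ∀ r ∈ Ioi (0:ℝ),
      -(deriv (deriv a) r) + deriv a r / r - (f r)^2 * (1 - a r) = 0) :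
    ∀ u v : ℝ → ℝ,
      (∀ r ∈ Ioi (0:ℝ), ContDiffAt ℝ (⊤ : ℕ∞) u r) →
      (∀ r ∈ Ioi (0:ℝ), ContDiffAt ℝ (⊤ : ℕ∞) v r) →
      ∀ r ∈ Ioi (0:ℝ),
        (G0star₁ f (G0₁ f u v) (G0₂ f u v) r
          = -(deriv (deriv u) r) - deriv u r / r
            + (((n:ℝ) * (1 - a r) / r)^2 + lam / 2 * ((f r)^2 - 1) + (f r)^2) * u r
            - 2 * deriv f r * v r) ∧
        (G0star₂ f (G0₁ f u v) (G0₂ f u v) r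
          = -2 * deriv f r * u r
            + (-(deriv (deriv v) r) - deriv v r / r + (1 / r^2 + (f r)^2) * v r)) := by
  intro u v hu hv r hr
  have hr0 : (0:ℝ) < r := hr
  have hrne : r ≠ 0 := ne_of_gt hr0
  have hfne : f r ≠ 0 := ne_of_gt (hf01 r hr).1
  obtain ⟨hdf, hddf⟩ := hda f hf hr
  obtain ⟨hdu, hddu⟩ := hda u hu hr
  obtain ⟨hdv, hddv⟩ := hda v hv hr
  have hp : HasDerivAt (G0₁ f u v)
      (deriv (deriv u) r
        - ((deriv (deriv f) r * f r - deriv f r * deriv f r) / f r ^ 2 * u r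
            + deriv f r / f r * deriv u r)
        + (deriv f r * v r + f r * deriv v r)) r := by
    exact (hddu.sub ((hddf.div hdf hfne).mul hdu)).add (hdf.mul hdv)
  have hq : HasDerivAt (G0₂ f u v)
      (deriv f r * u r + f r * deriv u r + deriv (deriv v) r
        + (deriv v r * r - v r * 1) / r ^ 2) r := by
    exact ((hdf.mul hdu).add hddv).add (hdv.div (hasDerivAt_id r) hrne)
  have hF2 : deriv (deriv f) r
      = -(deriv f r / r) + ((n:ℝ) * (1 - a r) / r)^2 * f r
        + lam / 2 * ((f r)^2 - 1) * f r := by linarith [hode1 r hr]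
  constructor
  · simp only [G0star₁, hp.deriv, G0₁, G0₂, hF2]
    field_simp
    ring
  · simp only [G0star₂, hq.deriv, G0₁, G0₂]
    field_simp
    ring
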